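/- arXiv:1709.02330 — 3 statements merged into one kernel-verified Lean document; each statement's English description precedes it below -/
import Mathlib

section
/- For every natural number ℓ there exists a unique monic polynomial q of degree ℓ over ℂ whose coefficient of w^{ℓ-1} equals 1 (when ℓ ≥ 1) such that the polynomial (2ℓ+1)·(w−2)·q(w) − w·q(w) − 2·w·(w−2)·q′(w) is a constant polynomial. -/
/-!
Comparing coefficients of `w^(n+1)`, `whithamPoly ℓ q` is constant exactly when
`(ℓ - n) q_n = (2ℓ - 1 - 2n) q_(n+1)` for all `n`. Read downwards from the leading coefficient
this recurrence determines a monic `q` of degree `ℓ`, since `ℓ - n ≠ 0` for `n < ℓ`; its solution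
has `q_(ℓ-j) = binom(2j, j) / 2^j`, which is `1` for `j = 1`.
-/

open Polynomial

/-- The expression `(2ℓ+1)(w−2)q(w) − w q(w) − 2w(w−2)q′(w)`. -/
noncomputable def whithamPoly (ℓ : ℕ) (q : Polynomial ℂ) : Polynomial ℂ :=
  C (2 * (ℓ : ℂ) + 1) * ((X - C 2) * q) - X * q - C 2 * X * (X - C 2) * derivative q

lemma coeff_X_mul_derivative {R : Type*} [CommSemiring R] (q : R[X]) (n : ℕ) :
    (X * derivative q).coeff n = n * q.coeff n := by
  cases n with
  | zero => simp
  | succ m => rw [coeff_X_mul, coeff_derivative, Nat.cast_succ, mul_comm]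

lemma coeff_whithamPoly_succ (ℓ : ℕ) (q : ℂ[X]) (n : ℕ) :
    (whithamPoly ℓ q).coeff (n + 1)
      = 2 * ((ℓ - n) * q.coeff n - (2 * ℓ - 1 - 2 * n) * q.coeff (n + 1)) := by
  have expand : whithamPoly ℓ q
      = C (-2 * (2 * (ℓ : ℂ) + 1)) * q + C (2 * (ℓ : ℂ)) * (X * q)
        - C 2 * (X * (X * derivative q)) + C 4 * (X * derivative q) := by
    simp only [whithamPoly, C_mul, C_add, C_neg, C_1, map_ofNat]
    ring
  simp only [expand, coeff_add, coeff_sub, coeff_C_mul, coeff_X_mul, coeff_X_mul_derivative,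
    coeff_derivative]
  ring

lemma exists_whithamPoly_eq_C_iff (ℓ : ℕ) (q : ℂ[X]) :
    (∃ K, whithamPoly ℓ q = C K) ↔
      ∀ n : ℕ, (ℓ - n) * q.coeff n = (2 * ℓ - 1 - 2 * n) * q.coeff (n + 1) := by
  constructor
  · rintro ⟨K, hK⟩ n
    have h := coeff_whithamPoly_succ ℓ q n
    rw [hK, coeff_C_succ] at h
    linear_combination -h / 2
  · intro h
    refine ⟨(whithamPoly ℓ q).coeff 0, ?_⟩
    ext (_ | n)
    · rw [coeff_C_zero]
    · rw [coeff_whithamPoly_succ, coeff_C_succ, h, sub_self, mul_zero]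

lemma eq_zero_of_recurrence_of_degree_lt {K : Type*} [Field K] [CharZero K] {ℓ : ℕ} {c : ℕ → K}
    {d : K[X]} (hrec : ∀ n : ℕ, (ℓ - n) * d.coeff n = c n * d.coeff (n + 1))
    (hdeg : d.degree < ℓ) : d = 0 := by
  by_contra hd
  have hlt : d.natDegree < ℓ := (natDegree_lt_iff_degree_lt hd).mpr hdeg
  have hlead := hrec d.natDegree
  rw [coeff_eq_zero_of_natDegree_lt (Nat.lt_succ_self _), mul_zero] at hlead
  have hℓ : (ℓ : K) - d.natDegree ≠ 0 := by
    rw [sub_ne_zero, Ne, Nat.cast_inj]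
    exact hlt.ne'
  exact hd (leadingCoeff_eq_zero.mp ((mul_eq_zero.mp hlead).resolve_left hℓ))

lemma eq_of_monic_of_recurrence {K : Type*} [Field K] [CharZero K] {ℓ : ℕ} {c : ℕ → K}
    {p q : K[X]} (hp : p.Monic) (hq : q.Monic) (hpd : p.natDegree = ℓ) (hqd : q.natDegree = ℓ)
    (hp_rec : ∀ n : ℕ, (ℓ - n) * p.coeff n = c n * p.coeff (n + 1))
    (hq_rec : ∀ n : ℕ, (ℓ - n) * q.coeff n = c n * q.coeff (n + 1)) : p = q := by
  refine sub_eq_zero.mp (eq_zero_of_recurrence_of_degree_lt (ℓ := ℓ) (c := c) (fun n => ?_) ?_)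
  · rw [coeff_sub, coeff_sub, mul_sub, mul_sub, hp_rec n, hq_rec n]
  · have hp_deg : p.degree = ℓ := (degree_eq_iff_natDegree_eq hp.ne_zero).mpr hpd
    calc (p - q).degree < p.degree :=
          degree_sub_lt_left (by rw [hp_deg, degree_eq_natDegree hq.ne_zero, hqd]) hp.ne_zero
            (by rw [hp.leadingCoeff, hq.leadingCoeff])
      _ = ℓ := hp_deg

noncomputable def whithamCoeff (j : ℕ) : ℂ := Nat.centralBinom j / 2 ^ j

lemma succ_mul_whithamCoeff_succ (j : ℕ) :
    (j + 1) * whithamCoeff (j + 1) = (2 * j + 1) * whithamCoeff j := by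
  have h : ((j : ℂ) + 1) * Nat.centralBinom (j + 1) = 2 * (2 * j + 1) * Nat.centralBinom j := by
    exact_mod_cast Nat.succ_mul_centralBinom_succ j
  simp only [whithamCoeff, pow_succ]
  field_simp
  linear_combination h

noncomputable def whithamSolution (ℓ : ℕ) : ℂ[X] :=
  ∑ k ∈ Finset.range (ℓ + 1), monomial k (whithamCoeff (ℓ - k))

lemma coeff_whithamSolution (ℓ k : ℕ) :
    (whithamSolution ℓ).coeff k = if k ≤ ℓ then whithamCoeff (ℓ - k) else 0 := by
  simp [whithamSolution, coeff_monomial]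

lemma natDegree_whithamSolution (ℓ : ℕ) : (whithamSolution ℓ).natDegree = ℓ := by
  refine natDegree_eq_of_le_of_coeff_ne_zero ?_ ?_
  · refine natDegree_le_iff_coeff_eq_zero.mpr fun k hk => ?_
    rw [coeff_whithamSolution, if_neg (not_le.mpr (by exact_mod_cast hk))]
  · simp [coeff_whithamSolution, whithamCoeff]

lemma monic_whithamSolution (ℓ : ℕ) : (whithamSolution ℓ).Monic := by
  simp [Monic, leadingCoeff, natDegree_whithamSolution, coeff_whithamSolution, whithamCoeff]

lemma coeff_whithamSolution_sub_one {ℓ : ℕ} (hℓ : 1 ≤ ℓ) :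
    (whithamSolution ℓ).coeff (ℓ - 1) = 1 := by
  rw [coeff_whithamSolution, if_pos (Nat.sub_le ℓ 1), Nat.sub_sub_self hℓ]
  norm_num [whithamCoeff, Nat.centralBinom]

lemma whithamSolution_recurrence (ℓ n : ℕ) :
    (ℓ - n) * (whithamSolution ℓ).coeff n
      = (2 * ℓ - 1 - 2 * n) * (whithamSolution ℓ).coeff (n + 1) := by
  simp only [coeff_whithamSolution]
  rcases lt_trichotomy n ℓ with hn | rfl | hn
  · obtain ⟨j, rfl⟩ : ∃ j, ℓ = n + j + 1 := ⟨ℓ - n - 1, by omega⟩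
    rw [if_pos (by omega), if_pos (by omega), show n + j + 1 - n = j + 1 by omega,
      show n + j + 1 - (n + 1) = j by omega]
    push_cast
    linear_combination succ_mul_whithamCoeff_succ j
  · simp
  · rw [if_neg (by omega), if_neg (by omega), mul_zero, mul_zero]

theorem stmt0 (ℓ : ℕ) :
    ∃! q : Polynomial ℂ, q.Monic ∧ q.natDegree = ℓ ∧
      (1 ≤ ℓ → q.coeff (ℓ - 1) = 1) ∧ ∃ K : ℂ, whithamPoly ℓ q = C K := by
  refine ⟨whithamSolution ℓ, ⟨monic_whithamSolution ℓ, natDegree_whithamSolution ℓ,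
    coeff_whithamSolution_sub_one,
    (exists_whithamPoly_eq_C_iff ℓ _).mpr (whithamSolution_recurrence ℓ)⟩, ?_⟩
  rintro q ⟨hmonic, hdeg, -, hconst⟩
  exact eq_of_monic_of_recurrence hmonic (monic_whithamSolution ℓ) hdeg
    (natDegree_whithamSolution ℓ) ((exists_whithamPoly_eq_C_iff ℓ q).mp hconst)
    (whithamSolution_recurrence ℓ)
end

section
/- Let a, b, c, ȧ, ḃ be polynomials over ℂ satisfying 2·a·ḃ − ȧ·b = λ·(2·a·c′ − a′·c) as polynomials in λ. If α ∈ ℂ is a simple root of a (i.e. a(α) = 0 and a′(α) ≠ 0) with b(α) ≠ 0, then ȧ(α)/a′(α) = α·c(α)/b(α). -/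
open Polynomial

theorem stmt9 (a b c adot bdot : Polynomial ℂ)
    (h : 2 * a * bdot - adot * b = X * (2 * a * derivative c - derivative a * c))
    (α : ℂ) (hroot : a.eval α = 0) (hsimple : (derivative a).eval α ≠ 0)
    (hb : b.eval α ≠ 0) :
    adot.eval α / (derivative a).eval α = α * c.eval α / b.eval α := by
  have := congrArg (eval α) h
  simp [eval_mul, eval_sub, hroot] at this
  rw [div_eq_div_iff hsimple hb]
  linear_combination this
end

section
/- Let a, b, c, ȧ, ḃ be polynomials over ℂ satisfying 2·a·ḃ − ȧ·b = λ·(2·a·c′ − a′·c). If β ∈ ℂ is a simple root of b (b(β) = 0, b′(β) ≠ 0) with a(β) ≠ 0, then ḃ(β)/b′(β) = −β·(a′(β)·c(β) − 2·a(β)·c′(β))/(2·a(β)·b′(β)). -/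
open Polynomial

theorem two_mul_eval_mul_eval_of_eval_eq_zero {R : Type*} [CommRing R] {a b c adot bdot : R[X]}
    (h : 2 * a * bdot - adot * b = X * (2 * a * derivative c - derivative a * c))
    {β : R} (hroot : b.eval β = 0) :
    2 * a.eval β * bdot.eval β
      = β * (2 * a.eval β * (derivative c).eval β - (derivative a).eval β * c.eval β) := by
  have h_eval := congrArg (eval β) h
  simp only [eval_mul, eval_sub, eval_ofNat, eval_X, hroot, mul_zero, sub_zero] at h_eval
  exact h_eval

theorem stmt10 (a b c adot bdot : Polynomial ℂ)
    (h : 2 * a * bdot - adot * b = X * (2 * a * derivative c - derivative a * c))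
    (β : ℂ) (hroot : b.eval β = 0) (hsimple : (derivative b).eval β ≠ 0)
    (ha : a.eval β ≠ 0) :
    bdot.eval β / (derivative b).eval β
      = -β * ((derivative a).eval β * c.eval β - 2 * a.eval β * (derivative c).eval β)
          / (2 * a.eval β * (derivative b).eval β) := by
  have key := two_mul_eval_mul_eval_of_eval_eq_zero h hroot
  rw [div_eq_div_iff hsimple (by simp [ha, hsimple])]
  linear_combination (derivative b).eval β * key
end
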